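/- arXiv:2505.18113 — 3 statements merged into one kernel-verified Lean document; each statement's English description precedes it below -/
import Mathlib

section
/- Consider the scalar recursion x^t = x^{t-1} − η·D·(sign(x^{t-1})/√n − w*) + η·ε^t with w* = 1/√n, constant step size η > 0, drift constant D > 0, and perturbations bounded by |ε^t| ≤ Δ where Δ = 2aρ/η with a = ηD/√n and ρ < 1/2. If x^{t-1} ≥ 0 and x^t < 0, then x^t ≥ −2aρ and x^{t+1} ≥ 2a(1−2ρ) > 0. In particular, every excursion of x^t into the negative region lasts exactly one time step. -/
/-!
Because `w* = 1/√n`, the drift vanishes at nonnegative iterates and pushes negative ones up by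
exactly `2a`, while a perturbation moves the iterate by at most `2aρ`. So a step from `x ≥ 0`
lands no lower than `-2aρ`, and the following step adds at least `2a - 2aρ`.
-/

/-- The sign function with `sgn 0 = 1`. -/
noncomputable def sgn (x : ℝ) : ℝ := if 0 ≤ x then 1 else -1

lemma sgn_of_nonneg {x : ℝ} (hx : 0 ≤ x) : sgn x = 1 := if_pos hx

lemma sgn_of_neg {x : ℝ} (hx : x < 0) : sgn x = -1 := if_neg hx.not_ge

lemma sub_drift_of_nonneg (c s : ℝ) {x : ℝ} (hx : 0 ≤ x) :
    x - c * (sgn x / s - 1 / s) = x := by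
  rw [sgn_of_nonneg hx]; ring

lemma sub_drift_of_neg (c s : ℝ) {x : ℝ} (hx : x < 0) :
    x - c * (sgn x / s - 1 / s) = x + 2 * (c / s) := by
  rw [sgn_of_neg hx]; ring

lemma neg_le_mul_of_abs_le_div {η e b : ℝ} (hη : 0 < η) (he : |e| ≤ b / η) : -b ≤ η * e := by
  have h := (abs_le.1 he).1
  rwa [← neg_div, div_le_iff₀ hη, mul_comm] at h

theorem one_step_reset_constant_step_general
    (n : ℕ) (hn : 0 < n) (η D ρ : ℝ) (hη : 0 < η) (hD : 0 < D)
    (hρ : ρ < 1/2)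
    (a : ℝ) (ha : a = η * D / Real.sqrt n)
    (Δ : ℝ) (hΔ : Δ = 2 * a * ρ / η)
    (wstar : ℝ) (hw : wstar = 1 / Real.sqrt n)
    (x ε : ℕ → ℝ) (hε : ∀ t, |ε t| ≤ Δ)
    (hrec : ∀ t, x (t + 1) = x t - η * D * (sgn (x t) / Real.sqrt n - wstar) + η * ε (t + 1))
    (t : ℕ) (hpos : 0 ≤ x t) (hneg : x (t + 1) < 0) :
    x (t + 1) ≥ -(2 * a * ρ) ∧ x (t + 2) ≥ 2 * a * (1 - 2 * ρ) ∧
      0 < 2 * a * (1 - 2 * ρ) := by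
  subst hΔ hw
  have hpert (s : ℕ) : -(2 * a * ρ) ≤ η * ε s := neg_le_mul_of_abs_le_div hη (hε s)
  have hstay : x (t + 1) = x t + η * ε (t + 1) := by
    rw [hrec, sub_drift_of_nonneg _ _ hpos]
  have hjump : x (t + 2) = x (t + 1) + 2 * a + η * ε (t + 2) := by
    rw [hrec (t + 1), sub_drift_of_neg _ _ hneg, ← ha]
  have ha0 : 0 < a := ha ▸ div_pos (mul_pos hη hD) (Real.sqrt_pos.2 (Nat.cast_pos.2 hn))
  refine ⟨by linarith [hpert (t + 1)], by linarith [hpert (t + 1), hpert (t + 2)], ?_⟩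
  exact mul_pos (by positivity) (by linarith)

theorem one_step_reset_constant_step
    (n : ℕ) (hn : 0 < n) (η D ρ : ℝ) (hη : 0 < η) (hD : 0 < D)
    (hρ0 : 0 < ρ) (hρ : ρ < 1/2)
    (a : ℝ) (ha : a = η * D / Real.sqrt n)
    (Δ : ℝ) (hΔ : Δ = 2 * a * ρ / η)
    (wstar : ℝ) (hw : wstar = 1 / Real.sqrt n)
    (x ε : ℕ → ℝ) (hε : ∀ t, |ε t| ≤ Δ)
    (hrec : ∀ t, x (t + 1) = x t - η * D * (sgn (x t) / Real.sqrt n - wstar) + η * ε (t + 1))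
    (t : ℕ) (hpos : 0 ≤ x t) (hneg : x (t + 1) < 0) :
    x (t + 1) ≥ -(2 * a * ρ) ∧ x (t + 2) ≥ 2 * a * (1 - 2 * ρ) ∧
      0 < 2 * a * (1 - 2 * ρ) :=
  one_step_reset_constant_step_general n hn η D ρ hη hD hρ a ha Δ hΔ wstar hw x ε hε hrec t hpos
    hneg
end

section
/- Under the cycle structure of the previous lemma (each −1 isolated and followed by at least L ≥ (1−2ρ)/ρ steps of +1, with ρ < 1/2), the average sign satisfies (1/T)·Σ_{t=1}^T s^t ≥ 1 − 2ρ/(1−ρ) − 4/T. -/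
/-! Every −1 lowers the sum of the `T` signs by 2, and up to time `T₀` the only possible −1 is
at `T₀` itself, so at most `1 + γ ≤ Tρ/(1−ρ) + 2` signs are −1. -/

open Finset

theorem sum_eq_card_sub_two_mul_card_filter_eq_neg_one {ι : Type*} (S : Finset ι) (f : ι → ℤ)
    (hf : ∀ t ∈ S, f t = 1 ∨ f t = -1) :
    ∑ t ∈ S, f t = #S - 2 * #(S.filter (f · = -1)) := by
  have hsign : ∀ t ∈ S, f t = 1 - 2 * if f t = -1 then 1 else 0 := by
    intro t ht
    rcases hf t ht with h | h <;> simp [h]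
  rw [sum_congr rfl hsign, sum_sub_distrib, ← mul_sum, sum_boole]
  simp

theorem card_filter_Icc_le_one_add_card_filter_Icc (p : ℕ → Prop) [DecidablePred p] (T T₀ : ℕ)
    (hbefore : ∀ t, 1 ≤ t → t < T₀ → ¬ p t) :
    #((Icc 1 T).filter p) ≤ 1 + #((Icc (T₀ + 1) T).filter p) := by
  have hsub : (Icc 1 T).filter p ⊆ insert T₀ ((Icc (T₀ + 1) T).filter p) := by
    intro t ht
    simp only [mem_filter, mem_Icc, mem_insert] at ht ⊢
    obtain ⟨⟨h1, hT⟩, hp⟩ := ht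
    have : T₀ ≤ t := not_lt.1 fun h => hbefore t h1 h hp
    rcases this.eq_or_lt with rfl | hlt
    · exact .inl rfl
    · exact .inr ⟨⟨hlt, hT⟩, hp⟩
  exact (card_le_card hsub).trans ((card_insert_le _ _).trans_eq (add_comm _ _))

theorem one_sub_two_mul_sub_four_div_le_of_le {T n c : ℝ} (hT : 0 < T) (hn : n ≤ T * c + 2) :
    1 - 2 * c - 4 / T ≤ 1 / T * (T - 2 * n) := by
  rw [one_div_mul_eq_div, le_div_iff₀ hT, sub_mul, sub_mul, div_mul_cancel₀ _ hT.ne']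
  linarith

theorem average_sign_lower_bound_general
    (T T₀ : ℕ) (ρ : ℝ) (hρ0 : 0 < ρ) (hρ : ρ < 1/2)
    (s : ℕ → ℤ) (hval : ∀ t, s t = 1 ∨ s t = -1)
    (hT₀pos : 1 ≤ T₀) (hT₀le : T₀ ≤ T)
    (hbefore : ∀ t, 1 ≤ t → t < T₀ → s t = 1)
    (hγ : (((Finset.Icc (T₀ + 1) T).filter (fun t => s t = -1)).card : ℝ)
        ≤ ((T : ℝ) - T₀) * ρ / (1 - ρ) + 1) :
    (1 / (T : ℝ)) * ∑ t ∈ Finset.Icc 1 T, ((s t : ℝ))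
      ≥ 1 - 2 * ρ / (1 - ρ) - 4 / T := by
  have hT : (0 : ℝ) < T := by exact_mod_cast hT₀pos.trans hT₀le
  have hsum := sum_eq_card_sub_two_mul_card_filter_eq_neg_one (Icc 1 T) s fun t _ => hval t
  have hcount : (#((Icc 1 T).filter (s · = -1)) : ℝ) ≤ 1 + #((Icc (T₀ + 1) T).filter (s · = -1)) :=
    mod_cast card_filter_Icc_le_one_add_card_filter_Icc _ T T₀ fun t h1 h2 => by
      simp [hbefore t h1 h2]
  have hdrop : ((T : ℝ) - T₀) * ρ / (1 - ρ) ≤ T * (ρ / (1 - ρ)) := by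
    rw [mul_div_assoc]
    gcongr
    · exact div_nonneg hρ0.le (by linarith)
    · exact sub_le_self _ T₀.cast_nonneg
  rw [← Int.cast_sum, hsum, mul_div_assoc]
  push_cast
  rw [Nat.card_Icc, Nat.add_sub_cancel]
  exact one_sub_two_mul_sub_four_div_le_of_le hT (by linarith)

theorem average_sign_lower_bound
    (T T₀ : ℕ) (ρ : ℝ) (hρ0 : 0 < ρ) (hρ : ρ < 1/2)
    (s : ℕ → ℤ) (hval : ∀ t, s t = 1 ∨ s t = -1)
    (hT₀pos : 1 ≤ T₀) (hT₀le : T₀ ≤ T)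
    (hbefore : ∀ t, 1 ≤ t → t < T₀ → s t = 1)
    (hfirst : s T₀ = -1)
    (hγ : (((Finset.Icc (T₀ + 1) T).filter (fun t => s t = -1)).card : ℝ)
        ≤ ((T : ℝ) - T₀) * ρ / (1 - ρ) + 1) :
    (1 / (T : ℝ)) * ∑ t ∈ Finset.Icc 1 T, ((s t : ℝ))
      ≥ 1 - 2 * ρ / (1 - ρ) - 4 / T :=
  average_sign_lower_bound_general T T₀ ρ hρ0 hρ s hval hT₀pos hT₀le hbefore hγ
end

section
/- After a one-step reset yielding x^{k+1} ≥ D[η_{k+1}(1−ρ) − η_k·ρ] > 0, if during the subsequent nonnegative phase the iterate can decrease by at most η_{k+1}·ρ·D per step (using nonincreasing step sizes), then the nonnegative phase lasts at least L steps where L ≥ (1−ρ)/ρ − η_k/η_{k+1}. In particular, if η_k/η_{k+1} ≤ M₀, then L ≥ (1 − (1+M₀)ρ)/ρ. -/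
theorem nonnegative_phase_length_lower_bound
    (D ρ M₀ : ℝ) (hD : 0 < D) (hM₀ : 1 ≤ M₀)
    (hρ0 : 0 < ρ) (hρ : ρ < 1 / (1 + M₀))
    (η x : ℕ → ℝ) (hηpos : ∀ t, 0 < η t) (hηmono : Antitone η)
    (k : ℕ) (hratio : η k / η (k + 1) ≤ M₀)
    (hreset : x (k + 1) ≥ D * (η (k + 1) * (1 - ρ) - η k * ρ))
    (hstep : ∀ s, 0 ≤ x (k + 1 + s) → x (k + 1 + s + 1) ≥ x (k + 1 + s) - η (k + 1) * ρ * D)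
    (L : ℕ) (hphase : (∀ s < L, 0 ≤ x (k + 1 + s)) ∧ x (k + 1 + L) < 0) :
    ((L : ℝ) ≥ (1 - ρ) / ρ - η k / η (k + 1)) ∧
    ((L : ℝ) ≥ (1 - (1 + M₀) * ρ) / ρ) := by
  obtain ⟨hpos, hneg⟩ := hphase
  have ha : 0 < η (k + 1) := hηpos (k + 1)
  have key : ∀ s ≤ L, x (k + 1 + s) ≥ x (k + 1) - (s : ℝ) * (η (k + 1) * ρ * D) := by
    intro s hs
    induction s with
    | zero => simp
    | succ n ih =>
      have hn : n < L := Nat.lt_of_succ_le hs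
      have ihn := ih (le_of_lt hn)
      have hx := hpos n hn
      have h := hstep n hx
      have e : k + 1 + (n + 1) = k + 1 + n + 1 := by omega
      rw [e]
      push_cast
      linarith
  have hL := key L le_rfl
  have h2 : η (k + 1) * (1 - ρ) - η k * ρ ≤ (L : ℝ) * (η (k + 1) * ρ) := by
    nlinarith
  have h1 : (L : ℝ) ≥ (1 - ρ) / ρ - η k / η (k + 1) := by
    have heq : (1 - ρ) / ρ - η k / η (k + 1)
        = (η (k + 1) * (1 - ρ) - η k * ρ) / (ρ * η (k + 1)) := by
      field_simp
    rw [ge_iff_le, heq, div_le_iff₀ (by positivity)]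
    nlinarith
  refine ⟨h1, ?_⟩
  have heq2 : (1 - (1 + M₀) * ρ) / ρ = (1 - ρ) / ρ - M₀ := by
    field_simp; ring
  rw [heq2]
  linarith
end
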